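/- Let f : ℝ^m → ℝ^n be additive up to a constant (f(x+y) = f(x) + f(y) + c for a fixed c ∈ ℝ^n, equivalently f − f(0) is additive), let S ⊆ ℝ^m, and let {X_t}_{t∈S} be a family of subsets of ℝ^n admitting a nesting direction L ⊆ S − S (so that for every a ∈ L and t ∈ S, t + a ∈ S and the nesting properties hold). If X = ⋃_{t∈S} (f(t) + X_t) contains no k-grid, then neither does Y = f(S) + ⋃_{t∈S} X_t: for every finite B ⊆ Y there is a translate B' = v + B with B' ⊆ X. -/

import Mathlib

/-! Given a finite set of points `b = f(s_b) + x_b` of `Y` with `x_b ∈ X_{t_b}`, one nesting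
direction `a` with `X_{t_b} ⊆ X_{s_b + a}` for all `b` at once works for the whole set: since
`f(s_b + a) = f(a) + f(s_b) + c`, the single translation by `f(a) + c` moves every `b` to
`f(s_b + a) + x_b ∈ X`. A `k`-grid in `Y` would therefore have a translate, again a `k`-grid,
inside `X`. -/

section Grid

variable {ι : Type*} {E : ι → Type*}

def HasGrid (k : ℕ) (X : Set (∀ i, E i)) : Prop :=
  ∃ B : ∀ i, Finset (E i), (∀ i, (B i).card = k) ∧ {z | ∀ i, z i ∈ B i} ⊆ X

theorem HasGrid.of_forall_finset_exists_translate [Fintype ι] [DecidableEq ι]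
    [∀ i, AddGroup (E i)]
    {k : ℕ} {X Y : Set (∀ i, E i)}
    (hY : ∀ B : Finset (∀ i, E i), ↑B ⊆ Y → ∃ v, ∀ b ∈ B, v + b ∈ X)
    (hgrid : HasGrid k Y) : HasGrid k X := by
  obtain ⟨B, hcard, hBY⟩ := hgrid
  obtain ⟨v, hv⟩ := hY (Fintype.piFinset B) fun z hz => hBY (Fintype.mem_piFinset.mp hz)
  refine ⟨fun i => (B i).map (addLeftEmbedding (v i)), fun i => by simpa using hcard i, ?_⟩
  intro z hz
  choose y hyB hyz using fun i => Finset.mem_map.mp (hz i)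
  have hz_eq : z = v + y := funext fun i => (hyz i).symm
  exact hz_eq ▸ hv y (Fintype.mem_piFinset.mpr hyB)

end Grid

theorem exists_nesting_of_fintype {M N : Type*} [Add M] {S : Set M} {X : M → Set N}
    (hnest : ∀ (l : ℕ) (t s : Fin l → M), (∀ i, t i ∈ S) → (∀ i, s i ∈ S) →
      ∃ a : M, (∀ i, s i + a ∈ S) ∧ ∀ i, X (t i) ⊆ X (s i + a))
    {ι : Type*} [Fintype ι] {t s : ι → M} (ht : ∀ i, t i ∈ S) (hs : ∀ i, s i ∈ S) :
    ∃ a : M, (∀ i, s i + a ∈ S) ∧ ∀ i, X (t i) ⊆ X (s i + a) := by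
  let e := Fintype.equivFin ι
  obtain ⟨a, hSa, hXa⟩ :=
    hnest _ (t ∘ e.symm) (s ∘ e.symm) (fun i => ht _) (fun i => hs _)
  exact ⟨a, fun i => by simpa using hSa (e i), fun i => by simpa using hXa (e i)⟩

theorem exists_translate_subset_of_nesting {M N : Type*} [AddCommGroup M] [AddCommGroup N]
    {f : M → N} {c : N}
    (hf : ∀ x y, f (x + y) = f x + f y + c) {S : Set M} {X : M → Set N}
    (hnest : ∀ (l : ℕ) (t s : Fin l → M), (∀ i, t i ∈ S) → (∀ i, s i ∈ S) →
      ∃ a : M, (∀ i, s i + a ∈ S) ∧ ∀ i, X (t i) ⊆ X (s i + a))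
    {B : Finset N} (hB : ∀ b ∈ B, ∃ s ∈ S, ∃ t ∈ S, ∃ x ∈ X t, b = f s + x) :
    ∃ v, ∀ b ∈ B, ∃ s ∈ S, ∃ x ∈ X s, v + b = f s + x := by
  choose s hs t ht x hx hb using fun b : B => hB b b.2
  obtain ⟨a, hSa, hXa⟩ := exists_nesting_of_fintype hnest ht hs
  have key : ∀ s x, f (s + a) + x = f a + c + (f s + x) := fun s x => by rw [hf]; abel
  refine ⟨f a + c, fun b hbB => ⟨s ⟨b, hbB⟩ + a, hSa _, x ⟨b, hbB⟩, hXa _ (hx _), ?_⟩⟩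
  rw [key, ← hb ⟨b, hbB⟩]

/-- Proposition 5.20: let `f` be additive up to a constant `c`, `S ⊆ ℝ^m`, and let the
family `{X_t}_{t ∈ S}` admit a nesting direction (formalised by its consequence: for
any finite lists `t_i, s_i ∈ S` there is `a` with `s_i + a ∈ S` and
`X_{t_i} ⊆ X_{s_i + a}` for all `i`). If `X = ⋃_{t ∈ S} (f(t) + X_t)` contains no
`k`-grid, then every finite subset of `Y = f(S) + ⋃_{t ∈ S} X_t` has a translate
contained in `X`, and `Y` contains no `k`-grid either. -/
theorem stmt19 {m r : ℕ} (d : Fin r → ℕ)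
    (f : (Fin m → ℝ) → ((i : Fin r) → Fin (d i) → ℝ))
    (c : (i : Fin r) → Fin (d i) → ℝ)
    (hf : ∀ x y : Fin m → ℝ, f (x + y) = f x + f y + c)
    (S : Set (Fin m → ℝ))
    (X : (Fin m → ℝ) → Set ((i : Fin r) → Fin (d i) → ℝ))
    (hnest : ∀ (l : ℕ) (t s : Fin l → Fin m → ℝ),
      (∀ i, t i ∈ S) → (∀ i, s i ∈ S) →
      ∃ a : Fin m → ℝ, (∀ i, s i + a ∈ S) ∧ ∀ i, X (t i) ⊆ X (s i + a))
    (k : ℕ)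
    (XX YY : Set ((i : Fin r) → Fin (d i) → ℝ))
    (hXX : XX = {p | ∃ t ∈ S, ∃ x ∈ X t, p = f t + x})
    (hYY : YY = {p | ∃ t ∈ S, ∃ t' ∈ S, ∃ x ∈ X t', p = f t + x})
    (hfree : ¬ ∃ B : (i : Fin r) → Finset (Fin (d i) → ℝ),
      (∀ i, (B i).card = k) ∧
      {z : (i : Fin r) → Fin (d i) → ℝ | ∀ i, z i ∈ B i} ⊆ XX) :
    (∀ B : Finset ((i : Fin r) → Fin (d i) → ℝ),
      ↑B ⊆ YY → ∃ v, ∀ b ∈ B, v + b ∈ XX) ∧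
    ¬ ∃ B : (i : Fin r) → Finset (Fin (d i) → ℝ),
      (∀ i, (B i).card = k) ∧
      {z : (i : Fin r) → Fin (d i) → ℝ | ∀ i, z i ∈ B i} ⊆ YY := by
  subst hXX hYY
  have htranslate : ∀ B : Finset ((i : Fin r) → Fin (d i) → ℝ),
      ↑B ⊆ {p | ∃ t ∈ S, ∃ t' ∈ S, ∃ x ∈ X t', p = f t + x} →
      ∃ v, ∀ b ∈ B, v + b ∈ {p | ∃ t ∈ S, ∃ x ∈ X t, p = f t + x} :=
    fun B hB => exists_translate_subset_of_nesting hf hnest fun b hb => hB hb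
  exact ⟨htranslate,
    fun hgrid => hfree (HasGrid.of_forall_finset_exists_translate htranslate hgrid)⟩
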